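/- arXiv:1302.0072 — 5 statements merged into one kernel-verified Lean document; each statement's English description precedes it below -/
import Mathlib

section
/- If a string P of length m is periodic with primitive period u of length p ≤ m/2, then any two occurrences of P in a text that start at positions i < j with j - i < m - p must satisfy j - i ≡ 0 (mod p). Equivalently, the distance between the starting positions of two overlapping occurrences of P (overlapping by more than p characters) is a multiple of the period p. -/
/-- `w^k` : concatenation of `k` copies of `w`. -/
def listPow {α : Type*} (w : List α) (k : ℕ) : List α := (List.replicate k w).flatten

/-- A string is primitive if it is not a proper power `w^j` with `j > 1`. -/
def IsPrimitive {α : Type*} (S : List α) : Prop :=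
  ∀ (w : List α) (j : ℕ), 1 < j → S ≠ listPow w j

/-- `P` occurs in the list `T` at position `i`. -/
def OccursAt {α : Type*} (P T : List α) (i : ℕ) : Prop :=
  (T.drop i).take P.length = P

/-!
If the occurrences at `i < j` overlap in at least `|u|` letters, then `P` agrees with its shift
by `d = j - i` on the first `|u|` positions. As `P` is a prefix of `u ^ (k + 1)`, this says that
`u` equals its rotation by `d`. A word equal to its rotation by some `0 < r < |u|` is a product
`x y = y x` of two nonempty words, so by Lyndon–Schützenberger it is a proper power; primitivity
of `u` therefore forces `|u| ∣ d`.
-/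

section

variable {α : Type*}

theorem listPow_zero (w : List α) : listPow w 0 = [] := rfl

theorem listPow_succ (w : List α) (n : ℕ) : listPow w (n + 1) = w ++ listPow w n := by
  simp [listPow, List.replicate_succ]

theorem listPow_one (w : List α) : listPow w 1 = w := by
  simp [listPow_succ, listPow_zero]

theorem listPow_add (w : List α) (a b : ℕ) :
    listPow w (a + b) = listPow w a ++ listPow w b := by
  simp only [listPow, List.replicate_add, List.flatten_append]

theorem length_listPow (w : List α) (n : ℕ) : (listPow w n).length = n * w.length := by
  simp [listPow, List.sum_replicate]

theorem getElem_listPow (w : List α) (n x : ℕ) (hx : x < (listPow w n).length) :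
    (listPow w n)[x] = w[x % w.length]'(Nat.mod_lt _ <|
      Nat.pos_of_ne_zero fun h => by simp [length_listPow, h] at hx) := by
  induction n generalizing x with
  | zero => simp [listPow_zero] at hx
  | succ n ih =>
    simp only [listPow_succ, List.getElem_append]
    split_ifs with hxw
    · simp [Nat.mod_eq_of_lt hxw]
    · rw [ih]
      congr 1
      exact (Nat.mod_eq_sub_mod (by omega)).symm

theorem exists_eq_listPow_of_append_comm {x y : List α} (h : x ++ y = y ++ x) :
    ∃ w a b, x = listPow w a ∧ y = listPow w b := by
  rcases eq_or_ne x [] with rfl | hx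
  · exact ⟨y, 0, 1, rfl, (listPow_one y).symm⟩
  rcases eq_or_ne y [] with rfl | hy
  · exact ⟨x, 1, 0, (listPow_one x).symm, rfl⟩
  rcases List.append_eq_append_iff.mp h with ⟨z, hxz, hzx⟩ | ⟨z, hyz, hzy⟩
  · have : z.length < y.length := by simp [hxz, List.length_pos_iff.mpr hx]
    obtain ⟨w, a, b, rfl, rfl⟩ := exists_eq_listPow_of_append_comm (hxz.symm.trans hzx)
    exact ⟨w, a, a + b, rfl, by rw [hxz, listPow_add]⟩
  · have : z.length < x.length := by simp [hyz, List.length_pos_iff.mpr hy]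
    obtain ⟨w, a, b, rfl, rfl⟩ := exists_eq_listPow_of_append_comm (hyz.symm.trans hzy)
    exact ⟨w, a + b, a, by rw [hyz, listPow_add], rfl⟩
termination_by x.length + y.length

theorem IsPrimitive.ne_nil {u : List α} (hu : IsPrimitive u) : u ≠ [] := by
  rintro rfl
  exact hu [] 2 one_lt_two (by simp [listPow])

theorem IsPrimitive.length_dvd_of_rotate_eq {u : List α} {n : ℕ} (hu : IsPrimitive u)
    (h : u.rotate n = u) : u.length ∣ n := by
  have hpos : 0 < u.length := List.length_pos_iff.mpr hu.ne_nil
  set r := n % u.length with hr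
  rw [Nat.dvd_iff_mod_eq_zero, ← hr]
  by_contra hr0
  have hrlt : r < u.length := Nat.mod_lt _ hpos
  rw [← List.rotate_mod, List.rotate_eq_drop_append_take hrlt.le] at h
  have hcomm : u.take r ++ u.drop r = u.drop r ++ u.take r := by rw [List.take_append_drop, h]
  obtain ⟨w, a, b, ha, hb⟩ := exists_eq_listPow_of_append_comm hcomm
  have hla := congrArg List.length ha
  have hlb := congrArg List.length hb
  simp only [List.length_take, List.length_drop, length_listPow] at hla hlb
  have ha0 : a ≠ 0 := by rintro rfl; omega
  have hb0 : b ≠ 0 := by rintro rfl; omega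
  exact hu w (a + b) (by omega) (by rw [listPow_add, ← ha, ← hb, List.take_append_drop])

theorem OccursAt.drop_sub_prefix {P T : List α} {i j : ℕ} (hi : OccursAt P T i)
    (hj : OccursAt P T j) (hij : i ≤ j) : P.drop (j - i) <+: P := by
  unfold OccursAt at hi hj
  have hj' := congrArg (List.take (P.length - (j - i))) hj
  rw [List.take_take, min_eq_left (Nat.sub_le _ _)] at hj'
  have h : P.drop (j - i) = P.take (P.length - (j - i)) := by
    conv_lhs => rw [← hi]
    rw [List.drop_take, List.drop_drop, Nat.add_sub_cancel' hij, hj']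
  rw [h]
  exact List.take_prefix _ _

theorem rotate_eq_self_of_drop_prefix {P u : List α} {n d : ℕ} (hPu : P <+: listPow u n)
    (hd : P.drop d <+: P) (hlen : d + u.length ≤ P.length) : u.rotate d = u := by
  refine List.ext_getElem (List.length_rotate _ _) fun x hx _ => ?_
  have hdx : (P.drop d)[x]'(by simp; omega) = P[x] := hd.getElem _
  simp only [List.getElem_drop, hPu.getElem, getElem_listPow] at hdx
  simpa [Nat.add_comm, Nat.mod_eq_of_lt (by omega : x < u.length)] using hdx

end

theorem overlapping_occurrences_period_divides_general {α : Type*}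
    (P u u' T : List α) (k : ℕ)
    (hprim : IsPrimitive u) (hu' : u' <+: u)
    (hP : P = listPow u k ++ u')
    (i j : ℕ) (hij : i < j) (hdist : j - i < P.length - u.length)
    (hOi : OccursAt P T i) (hOj : OccursAt P T j) :
    u.length ∣ (j - i) := by
  have hPu : P <+: listPow u (k + 1) := by
    obtain ⟨s, rfl⟩ := hu'
    exact ⟨s, by rw [hP, listPow_add, listPow_one, List.append_assoc]⟩
  exact hprim.length_dvd_of_rotate_eq <|
    rotate_eq_self_of_drop_prefix hPu (hOi.drop_sub_prefix hOj hij.le) (by omega)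

/-- If `P` of length `m` is periodic with primitive period `u` of length
`p ≤ m/2`, then two occurrences of `P` at positions `i < j` with
`j - i < m - p` satisfy `p ∣ (j - i)`. -/
theorem overlapping_occurrences_period_divides {α : Type*}
    (P u u' T : List α) (k : ℕ)
    (hprim : IsPrimitive u) (hk : 2 ≤ k) (hu' : u' <+: u) (hu'ne : u' ≠ u)
    (hP : P = listPow u k ++ u')
    (hp2 : 2 * u.length ≤ P.length)
    (i j : ℕ) (hij : i < j) (hdist : j - i < P.length - u.length)
    (hOi : OccursAt P T i) (hOj : OccursAt P T j) :
    u.length ∣ (j - i) :=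
  overlapping_occurrences_period_divides_general P u u' T k hprim hu' hP i j hij hdist hOi hOj
end

section
/- Fine and Wilf's periodicity lemma: if a string S of length n has periods p and q (meaning S[i] = S[i+p] for all valid i, and S[i] = S[i+q] for all valid i) with p + q - gcd(p,q) ≤ n, then S also has period gcd(p,q). -/
/-- A string `S` of length `n` (modelled as a function on ℕ) has period `p`
if `S i = S (i + p)` for all `i` with `i + p < n`. -/
def HasPeriod {α : Type*} (S : ℕ → α) (n p : ℕ) : Prop :=
  ∀ i, i + p < n → S i = S (i + p)

/-!
For `q < p`, the prefix of length `n - q` has periods `p - q` and `q`, so by induction along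
Euclid's algorithm it has period `gcd p q`. That prefix is at least `q` long and
`gcd p q ∣ q`, so the `q`-periodicity of the whole string carries the period `gcd p q`
from the prefix to all of `S`.
-/

namespace HasPeriod

variable {α : Type*} {S : ℕ → α} {n p q : ℕ}

theorem mono {m : ℕ} (h : HasPeriod S n p) (hmn : m ≤ n) : HasPeriod S m p :=
  fun i hi => h i (hi.trans_le hmn)

theorem eq_add_mul (h : HasPeriod S n p) (k : ℕ) {i : ℕ} (hi : i + k * p < n) :
    S i = S (i + k * p) := by
  induction k with
  | zero => simp
  | succ k ih =>
    rw [add_one_mul, ← add_assoc] at hi ⊢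
    exact (ih (by omega)).trans (h _ hi)

theorem eq_of_modEq (h : HasPeriod S n p) {i j : ℕ} (hi : i < n) (hj : j < n)
    (hij : i ≡ j [MOD p]) : S i = S j := by
  wlog hle : i ≤ j generalizing i j
  · exact (this hj hi hij.symm (by omega)).symm
  obtain ⟨k, hk⟩ := (Nat.modEq_iff_dvd' hle).mp hij
  have hj' : j = i + k * p := by rw [mul_comm, ← hk]; omega
  subst hj'
  exact h.eq_add_mul k hj

theorem iff_modEq : HasPeriod S n p ↔ ∀ i j, i < n → j < n → i ≡ j [MOD p] → S i = S j :=
  ⟨fun h _ _ => h.eq_of_modEq, fun h i hi =>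
    h i (i + p) (by omega) hi (Nat.add_mod_right i p).symm⟩

theorem sub (hp : HasPeriod S n p) (hq : HasPeriod S n q) (hqp : q ≤ p) :
    HasPeriod S (n - q) (p - q) := by
  intro i hi
  rw [hp i (by omega), hq (i + (p - q)) (by omega), add_assoc, Nat.sub_add_cancel hqp]

-- A `q`-periodic string is determined by its first `q` letters.
theorem of_prefix {m d : ℕ} (hq : HasPeriod S n q) (hd : HasPeriod S m d) (hq0 : 0 < q)
    (hdq : d ∣ q) (hqm : q ≤ m) : HasPeriod S n d := by
  refine iff_modEq.mpr fun i j hi hj hij => ?_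
  have hmod : i % q ≡ j % q [MOD d] :=
    ((Nat.mod_modEq i q).of_dvd hdq).trans (hij.trans ((Nat.mod_modEq j q).of_dvd hdq).symm)
  calc S i = S (i % q) := hq.eq_of_modEq hi ((Nat.mod_le i q).trans_lt hi) (Nat.mod_modEq i q).symm
    _ = S (j % q) := hd.eq_of_modEq ((Nat.mod_lt i hq0).trans_le hqm)
        ((Nat.mod_lt j hq0).trans_le hqm) hmod
    _ = S j := hq.eq_of_modEq ((Nat.mod_le j q).trans_lt hj) hj (Nat.mod_modEq j q)

end HasPeriod

theorem fine_and_wilf_general {α : Type*} (S : ℕ → α) (n p q : ℕ)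
    (hlen : p + q - Nat.gcd p q ≤ n)
    (hP : HasPeriod S n p) (hQ : HasPeriod S n q) :
    HasPeriod S n (Nat.gcd p q) := by
  induction hs : p + q using Nat.strong_induction_on generalizing n p q with
  | _ s ih =>
  wlog hqp : q ≤ p generalizing p q
  · rw [Nat.gcd_comm]
    exact this q p (by rwa [Nat.gcd_comm, add_comm]) hQ hP (by omega) (by omega)
  rcases Nat.eq_zero_or_pos q with rfl | hq
  · simpa using hP
  rcases hqp.eq_or_lt with rfl | hqp
  · simpa using hP
  have hgcd : Nat.gcd (p - q) q = Nat.gcd p q := by simp [Nat.gcd_sub_self_left hqp.le]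
  have hg_le_q : Nat.gcd p q ≤ q := Nat.le_of_dvd hq (Nat.gcd_dvd_right p q)
  have hg_le_sub : Nat.gcd p q ≤ p - q :=
    Nat.le_of_dvd (by omega) (hgcd ▸ Nat.gcd_dvd_left (p - q) q)
  have hprefix : HasPeriod S (n - q) (Nat.gcd p q) :=
    hgcd ▸ ih (p - q + q) (by omega) (n - q) (p - q) q (by omega)
      (hP.sub hQ hqp.le) (hQ.mono (Nat.sub_le n q)) rfl
  exact hQ.of_prefix hprefix hq (Nat.gcd_dvd_right p q) (by omega)

/-- Fine and Wilf's periodicity lemma: a string of length `n` with periods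
`p` and `q` such that `p + q - gcd(p,q) ≤ n` also has period `gcd(p,q)`. -/
theorem fine_and_wilf {α : Type*} (S : ℕ → α) (n p q : ℕ)
    (hp : 0 < p) (hq : 0 < q) (hpn : p ≤ n) (hqn : q ≤ n)
    (hlen : p + q - Nat.gcd p q ≤ n)
    (hP : HasPeriod S n p) (hQ : HasPeriod S n q) :
    HasPeriod S n (Nat.gcd p q) :=
  fine_and_wilf_general S n p q hlen hP hQ
end

section
/- Let P be an m × m̄ matrix (2D pattern) in which every row i is periodic with primitive period of length p_i ≤ m̄/4. Then the horizontal distance between any two occurrences of P in the same row of a text, whose occurrences overlap in at least m̄/2 columns, is a multiple of L = lcm(p_1, ..., p_m). -/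
/-- Row `i` of the `m × mb` matrix `P` has period `p`. -/
def RowHasPeriod {α : Type*} (P : ℕ → ℕ → α) (mb i p : ℕ) : Prop :=
  ∀ j, j + p < mb → P i j = P i (j + p)

/-- `p` is the length of the primitive (i.e. smallest) period of row `i`. -/
def RowPrimPeriod {α : Type*} (P : ℕ → ℕ → α) (mb i p : ℕ) : Prop :=
  0 < p ∧ RowHasPeriod P mb i p ∧ ∀ q, 0 < q → q < p → ¬ RowHasPeriod P mb i q

/-- The `m × mb` pattern `P` occurs in the 2D text `T` at position `(r, c)`. -/
def Occurs2D {α : Type*} (P T : ℕ → ℕ → α) (m mb r c : ℕ) : Prop :=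
  ∀ i < m, ∀ j < mb, T (r + i) (c + j) = P i j

/-!
Two overlapping occurrences of the pattern in one text row make their horizontal distance `d`
a period of every row of the pattern. Since `p i + d ≤ mb`, the residue `d % p i` is then a
period of row `i` as well (a weak form of Fine and Wilf), so minimality of `p i` forces
`p i ∣ d`, and the lcm divides `d`.
-/

section RowPeriod

variable {α : Type*} {P : ℕ → ℕ → α} {mb i p d : ℕ}

theorem RowHasPeriod.eq_add_mul (hp : RowHasPeriod P mb i p) (k : ℕ) :
    ∀ j, j + p * k < mb → P i j = P i (j + p * k) := by
  induction k with
  | zero => simp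
  | succ k ih =>
    intro j hj
    rw [ih j (by nlinarith), hp (j + p * k) (by nlinarith), mul_add_one, add_assoc]

theorem RowHasPeriod.eq_mod (hp : RowHasPeriod P mb i p) {j : ℕ} (hj : j < mb) :
    P i j = P i (j % p) := by
  have hdecomp := Nat.mod_add_div j p
  rw [hp.eq_add_mul (j / p) (j % p) (by omega), hdecomp]

theorem RowHasPeriod.mod (hp : RowHasPeriod P mb i p) (hd : RowHasPeriod P mb i d)
    (hpos : 0 < p) (hpd : p + d ≤ mb) : RowHasPeriod P mb i (d % p) := by
  intro j hj
  have hjp : j % p + d < mb := by have := Nat.mod_lt j hpos; omega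
  have hres : (j % p + d) % p = (j + d % p) % p := by
    rw [Nat.mod_add_mod, Nat.add_mod_mod]
  calc P i j = P i (j % p) := hp.eq_mod (by omega)
    _ = P i (j % p + d) := hd _ hjp
    _ = P i ((j % p + d) % p) := hp.eq_mod hjp
    _ = P i (j + d % p) := by rw [hres, ← hp.eq_mod hj]

theorem RowPrimPeriod.dvd_of_rowHasPeriod (hp : RowPrimPeriod P mb i p)
    (hd : RowHasPeriod P mb i d) (hpd : p + d ≤ mb) : p ∣ d := by
  obtain ⟨hpos, hper, hmin⟩ := hp
  by_contra hndvd
  exact hmin (d % p) (Nat.pos_of_ne_zero (mt Nat.dvd_of_mod_eq_zero hndvd))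
    (Nat.mod_lt d hpos) (hper.mod hd hpos hpd)

end RowPeriod

theorem Occurs2D.rowHasPeriod_of_add {α : Type*} {P T : ℕ → ℕ → α} {m mb r c d i : ℕ}
    (hO : Occurs2D P T m mb r c) (hO' : Occurs2D P T m mb r (c + d)) (hi : i < m) :
    RowHasPeriod P mb i d := by
  intro j hj
  rw [← hO' i hi j (by omega), ← hO i hi (j + d) hj, add_right_comm, add_assoc]

/-- If every row `i` of an `m × mb` pattern is periodic with primitive period
`p i ≤ mb/4`, then the horizontal distance between two occurrences in the same
text row that overlap in at least `mb/2` columns is a multiple of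
`L = lcm (p 1, ..., p m)`. -/
theorem lcm_divides_horizontal_distance {α : Type*} (P T : ℕ → ℕ → α)
    (m mb : ℕ) (p : ℕ → ℕ)
    (hper : ∀ i < m, RowPrimPeriod P mb i (p i))
    (hquarter : ∀ i < m, 4 * p i ≤ mb)
    (r c c' : ℕ) (hcc : c ≤ c') (hoverlap : 2 * (c' - c) ≤ mb)
    (hO : Occurs2D P T m mb r c) (hO' : Occurs2D P T m mb r c') :
    (Finset.range m).lcm p ∣ (c' - c) := by
  rw [← Nat.add_sub_cancel' hcc] at hO'
  refine Finset.lcm_dvd fun i hi => ?_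
  rw [Finset.mem_range] at hi
  have hsum : p i + (c' - c) ≤ mb := by have := hquarter i hi; omega
  exact (hper i hi).dvd_of_rowHasPeriod (hO.rowHasPeriod_of_add hO' hi) hsum
end

section
/- Transitivity of dueling / consistency: define two pattern placements (i, P) and (j, Q) in a text (P placed at position i, Q at position j, i ≤ j) to be consistent if they agree on their overlap, i.e., P[k + (j - i)] = Q[k] for all k with 0 ≤ k < |Q| and 0 ≤ k + (j-i) < |P|. If placements of the same pattern P at positions i ≤ j ≤ k are such that (i,P) is consistent with (j,P) and (j,P) is consistent with (k,P), and the three placements pairwise overlap (k - i < |P|), then (i,P) is consistent with (k,P). -/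
/-- Placements of the pattern `P` (of length `mP`) at positions `i ≤ j` of a
text are consistent if they agree on every text position they both cover. -/
def Consistent {α : Type*} (P : ℕ → α) (mP i j : ℕ) : Prop :=
  ∀ t, t < mP → t + (j - i) < mP → P (t + (j - i)) = P t

theorem consistency_transitive_general {α : Type*} (P : ℕ → α) (mP i j k : ℕ)
    (hij : i ≤ j) (hjk : j ≤ k)
    (h1 : Consistent P mP i j) (h2 : Consistent P mP j k) :
    Consistent P mP i k := by
  intro t ht htk
  have hshift : k - i = (k - j) + (j - i) := by omega
  calc P (t + (k - i)) = P (t + (k - j) + (j - i)) := by rw [hshift, Nat.add_assoc]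
    _ = P (t + (k - j)) := h1 _ (by omega) (by omega)
    _ = P t := h2 t ht (by omega)

/-- Transitivity of dueling/consistency for placements of the same pattern:
if the placements of `P` at `i ≤ j ≤ k` pairwise overlap (`k - i < mP`) and
`(i,P)` is consistent with `(j,P)` and `(j,P)` with `(k,P)`, then `(i,P)` is
consistent with `(k,P)`. -/
theorem consistency_transitive {α : Type*} (P : ℕ → α) (mP i j k : ℕ)
    (hij : i ≤ j) (hjk : j ≤ k) (hoverlap : k - i < mP)
    (h1 : Consistent P mP i j) (h2 : Consistent P mP j k) :
    Consistent P mP i k :=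
  consistency_transitive_general P mP i j k hij hjk h1 h2
end

section
/- Let P be an m × m̄ pattern whose rows have primitive periods p_1, ..., p_m, all ≤ m̄/4, and let L = lcm(p_1, ..., p_m). If P occurs in a text row at columns c and c' with |c - c'| < m̄/2, then |c - c'| is a multiple of L; hence the set of occurrences of P within a fixed text row of a text block of width 3m̄/2 forms an arithmetic progression with common difference L and can be stored in O(1) words (first occurrence, difference, count). -/
/-!
Two occurrences of `P` at distance `d ≤ mb/2` in the same text rows make `d` a period of every
row of `P`. Since `p i + d ≤ mb`, the periodicity lemma turns the periods `p i` and `d` of row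
`i` into the period `gcd (p i) d`, and minimality of `p i` forces `p i ∣ d`; hence `L ∣ d`.
Conversely, the text rows covered by the first and last occurrence in a window have the periods
`p i` throughout, because the two occurrences overlap in at least `p i` columns; so every
column between them at a multiple of `L` is again an occurrence.
-/

/-- `HasPeriodBelow f n p`: the word `f 0 ⋯ f (n - 1)` has period `p`. -/
def HasPeriodBelow {α : Type*} (f : ℕ → α) (n p : ℕ) : Prop :=
  ∀ j, j + p < n → f j = f (j + p)

namespace HasPeriodBelow

variable {α : Type*} {f g : ℕ → α} {n : ℕ}

theorem congr {p : ℕ} (hfg : ∀ x < n, f x = g x) (hg : HasPeriodBelow g n p) :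
    HasPeriodBelow f n p := fun j hj => by
  rw [hfg j (by omega), hfg (j + p) hj, hg j hj]

theorem sub {a b : ℕ} (hab : a ≤ b) (hn : a + b ≤ n) (ha : HasPeriodBelow f n a)
    (hb : HasPeriodBelow f n b) : HasPeriodBelow f n (b - a) := by
  intro j hj
  rcases lt_or_ge (j + b) n with h | h
  · have hback := ha (j + (b - a)) (by omega)
    rw [show j + (b - a) + a = j + b by omega] at hback
    rw [hb j h, hback]
  · have hfwd := ha (j - a) (by omega)
    have hlong := hb (j - a) (by omega)
    rw [show j - a + a = j by omega] at hfwd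
    rw [show j - a + b = j + (b - a) by omega] at hlong
    rw [← hfwd, hlong]

/-- The weak periodicity lemma of Fine and Wilf. -/
theorem gcd {a b : ℕ} (hn : a + b ≤ n) (ha : HasPeriodBelow f n a)
    (hb : HasPeriodBelow f n b) : HasPeriodBelow f n (Nat.gcd a b) := by
  rcases Nat.eq_zero_or_pos a with rfl | ha0
  · simpa using hb
  rcases Nat.eq_zero_or_pos b with rfl | hb0
  · simpa using ha
  rcases le_total a b with hab | hba
  · rw [← Nat.gcd_sub_self_right hab]
    exact gcd (by omega) ha (sub hab hn ha hb)
  · rw [← Nat.gcd_sub_self_left hba]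
    exact gcd (by omega) (sub hba (by omega) hb ha) hb
termination_by a + b

theorem mul {p : ℕ} (hp : HasPeriodBelow f n p) (t : ℕ) : HasPeriodBelow f n (t * p) := by
  induction t with
  | zero => intro j _; simp
  | succ t ih =>
    intro j hj
    rw [add_one_mul] at hj ⊢
    rw [hp j (by omega), ih (j + p) (by omega), add_assoc, add_comm p]

theorem of_dvd {p q : ℕ} (hp : HasPeriodBelow f n p) (hpq : p ∣ q) : HasPeriodBelow f n q := by
  obtain ⟨t, rfl⟩ := hpq
  rw [mul_comm]
  exact hp.mul t

theorem append {p d : ℕ} (hpd : p + d ≤ n) (hf : HasPeriodBelow f n p)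
    (hshift : HasPeriodBelow (fun x => f (d + x)) n p) : HasPeriodBelow f (d + n) p := by
  intro j hj
  rcases lt_or_ge (j + p) n with h | h
  · exact hf j h
  · have := hshift (j - d) (by omega)
    simp only at this
    rwa [show d + (j - d) = j by omega, show d + (j - d + p) = j + p by omega] at this

end HasPeriodBelow

section Pattern

variable {α : Type*} {P T : ℕ → ℕ → α} {m mb r c d i : ℕ}

theorem RowPrimPeriod.dvd {p q : ℕ} (hprim : RowPrimPeriod P mb i p)
    (hq : RowHasPeriod P mb i q) (hpq : p + q ≤ mb) : p ∣ q := by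
  obtain ⟨hp0, hp, hmin⟩ := hprim
  have hgcd : HasPeriodBelow (P i) mb (Nat.gcd p q) := HasPeriodBelow.gcd hpq hp hq
  have hle : Nat.gcd p q ≤ p := Nat.le_of_dvd hp0 (Nat.gcd_dvd_left p q)
  rcases hle.lt_or_eq with hlt | heq
  · exact absurd hgcd (hmin _ (Nat.gcd_pos_of_pos_left q hp0) hlt)
  · exact heq ▸ Nat.gcd_dvd_right p q

theorem Occurs2D.rowHasPeriod (h : Occurs2D P T m mb r c) (h' : Occurs2D P T m mb r (c + d))
    (hi : i < m) : RowHasPeriod P mb i d := by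
  intro j hj
  rw [← h i hi (j + d) hj, ← h' i hi j (by omega), show c + (j + d) = c + d + j by omega]

theorem Occurs2D.lcm_dvd {p : ℕ → ℕ} (hper : ∀ i < m, RowPrimPeriod P mb i (p i))
    (hshort : ∀ i < m, p i + d ≤ mb) (h : Occurs2D P T m mb r c)
    (h' : Occurs2D P T m mb r (c + d)) : (Finset.range m).lcm p ∣ d :=
  Finset.lcm_dvd fun i hi =>
    (hper i (Finset.mem_range.1 hi)).dvd (h.rowHasPeriod h' (Finset.mem_range.1 hi))
      (hshort i (Finset.mem_range.1 hi))

theorem Occurs2D.add_of_lcm_dvd {p : ℕ → ℕ} (hper : ∀ i < m, RowHasPeriod P mb i (p i))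
    (hshort : ∀ i < m, p i + d ≤ mb) (h : Occurs2D P T m mb r c)
    (h' : Occurs2D P T m mb r (c + d)) {s : ℕ} (hs : (Finset.range m).lcm p ∣ s)
    (hsd : s ≤ d) : Occurs2D P T m mb r (c + s) := by
  intro i hi j hj
  have hleft : HasPeriodBelow (fun x => T (r + i) (c + x)) mb (p i) :=
    HasPeriodBelow.congr (fun x hx => h i hi x hx) (hper i hi)
  have hright : HasPeriodBelow (fun x => T (r + i) (c + (d + x))) mb (p i) :=
    HasPeriodBelow.congr (fun x hx => by rw [← add_assoc]; exact h' i hi x hx) (hper i hi)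
  have hrow := (hleft.append (hshort i hi) hright).of_dvd
    ((Finset.dvd_lcm (Finset.mem_range.2 hi)).trans hs)
  rw [← h i hi j hj, add_assoc, add_comm s j]
  exact (hrow j (by omega)).symm

end Pattern

theorem Finset.exists_eq_image_range_of_dvd_sub (S : Finset ℕ) (L : ℕ)
    (hdvd : ∀ x ∈ S, ∀ y ∈ S, x ≤ y → L ∣ y - x)
    (hfill : ∀ x ∈ S, ∀ y ∈ S, ∀ s, L ∣ s → x + s ≤ y → x + s ∈ S) :
    ∃ c₀ k : ℕ, S = (Finset.range k).image (fun t => c₀ + t * L) := by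
  rcases S.eq_empty_or_nonempty with rfl | hS
  · exact ⟨0, 0, by simp⟩
  set x₀ := S.min' hS
  set y₀ := S.max' hS
  have hx₀ : x₀ ∈ S := S.min'_mem hS
  have hy₀ : y₀ ∈ S := S.max'_mem hS
  have hxy : x₀ ≤ y₀ := S.min'_le y₀ hy₀
  have hspan : (y₀ - x₀) / L * L = y₀ - x₀ := Nat.div_mul_cancel (hdvd x₀ hx₀ y₀ hy₀ hxy)
  refine ⟨x₀, (y₀ - x₀) / L + 1, Finset.ext fun c => ⟨fun hc => ?_, fun hc => ?_⟩⟩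
  · have hlo : x₀ ≤ c := S.min'_le c hc
    have hhi : c ≤ y₀ := S.le_max' c hc
    have hc₀ : (c - x₀) / L * L = c - x₀ := Nat.div_mul_cancel (hdvd x₀ hx₀ c hc hlo)
    refine Finset.mem_image.2 ⟨(c - x₀) / L, Finset.mem_range.2 ?_, by omega⟩
    have := Nat.div_le_div_right (c := L) (show c - x₀ ≤ y₀ - x₀ by omega)
    omega
  · obtain ⟨t, ht, rfl⟩ := Finset.mem_image.1 hc
    have : t * L ≤ (y₀ - x₀) / L * L :=
      Nat.mul_le_mul_right L (Nat.lt_succ_iff.1 (Finset.mem_range.1 ht))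
    exact hfill x₀ hx₀ y₀ hy₀ (t * L) (dvd_mul_left L t) (by omega)

/-- Let `P` be an `m × mb` pattern whose rows have primitive periods
`p 1, ..., p m`, all `≤ mb/4`, and let `L = lcm (p 1, ..., p m)`. Then (i) two
occurrences of `P` in the same text row at columns `c, c'` with
`|c - c'| < mb/2` are `L`-aligned, and (ii) the occurrences of `P` in a fixed
row of a text block of width `3mb/2` form an arithmetic progression with
common difference `L` (hence are storable in `O(1)` words). -/
theorem occurrences_form_arithmetic_progression {α : Type*} [DecidableEq α]
    (P T : ℕ → ℕ → α) (m mb : ℕ) (p : ℕ → ℕ)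
    (hper : ∀ i < m, RowPrimPeriod P mb i (p i))
    (hquarter : ∀ i < m, 4 * p i ≤ mb) (r : ℕ) :
    (∀ c c', c ≤ c' → 2 * (c' - c) < mb →
      Occurs2D P T m mb r c → Occurs2D P T m mb r c' →
      (Finset.range m).lcm p ∣ (c' - c)) ∧
    ∀ b : ℕ, ∃ c₀ k : ℕ,
      ((Finset.range (b + mb + 1)).filter
          (fun c => b ≤ c ∧ 2 * (c + mb) ≤ 2 * b + 3 * mb ∧
            ∀ i < m, ∀ j < mb, T (r + i) (c + j) = P i j)) =
        (Finset.range k).image (fun t => c₀ + t * (Finset.range m).lcm p) := by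
  have hshort : ∀ d, 2 * d ≤ mb → ∀ i < m, p i + d ≤ mb := fun d hd i hi => by
    have := hquarter i hi; omega
  have haligned : ∀ c c', c ≤ c' → 2 * (c' - c) ≤ mb →
      Occurs2D P T m mb r c → Occurs2D P T m mb r c' → (Finset.range m).lcm p ∣ (c' - c) :=
    fun c c' hle hd h h' => h.lcm_dvd hper (hshort _ hd) (by rwa [Nat.add_sub_cancel' hle])
  refine ⟨fun c c' hle hd => haligned c c' hle hd.le, fun b => ?_⟩
  apply Finset.exists_eq_image_range_of_dvd_sub
  · simp only [Finset.mem_filter, Finset.mem_range]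
    exact fun x hx y hy hxy => haligned x y hxy (by omega) hx.2.2.2 hy.2.2.2
  · simp only [Finset.mem_filter, Finset.mem_range]
    intro x hx y hy s hs hsy
    have hy' : Occurs2D P T m mb r (x + (y - x)) := by
      rw [Nat.add_sub_cancel' (by omega)]; exact hy.2.2.2
    exact ⟨by omega, by omega, by omega, Occurs2D.add_of_lcm_dvd (fun i hi => (hper i hi).2.1)
      (hshort _ (by omega)) hx.2.2.2 hy' hs (by omega)⟩
end
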